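/- Let T be a rooted tree and E' a subset of its edges such that every internal vertex of T incident to an edge of E' (as parent) also has at least one child-edge not in E'. Then the leaf sets of the connected components of the forest obtained by deleting E' from T form a partition of the leaf set of T. -/
import Mathlib


/-- A rooted tree on vertex type `V`, encoded by a parent map.
Edges are directed away from the root; the edge into a non-root vertex `v`
is `(par v, v)`. -/
structure RTree (V : Type*) where
  root : V
  par : V → V
  par_root : par root = root
  par_ne : ∀ v, v ≠ root → par v ≠ v
  reaches : ∀ v, ∃ k, par^[k] v = root

namespace RTree

variable {V : Type*}

/-- `anc T x y` : `x` is a descendant of `y`, i.e. `x ⪯_T y`. -/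
def anc (T : RTree V) (x y : V) : Prop := ∃ k, (T.par)^[k] x = y

/-- strict descendant: `x ≺_T y`. -/
def sanc (T : RTree V) (x y : V) : Prop := T.anc x y ∧ x ≠ y

def IsLeaf (T : RTree V) (v : V) : Prop := ∀ u, T.par u = v → u = v

/-- `x` is a least common ancestor of the set `A`. -/
def IsLca (T : RTree V) (A : Set V) (x : V) : Prop :=
  (∀ a ∈ A, T.anc a x) ∧ ∀ y, (∀ a ∈ A, T.anc a y) → T.anc x y

/-- A time map: strict descendants have strictly larger time stamps. -/
def IsTimeMap (T : RTree V) (τ : V → ℝ) : Prop :=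
  ∀ x y, T.sanc x y → τ y < τ x

end RTree

/-- Event labels: speciation `•`, duplication `□`, HGT `△`, leaf `⊙`. -/
inductive Event where
  | spec | dup | hgt | leaf
deriving DecidableEq

/-- The common setup: a gene tree `T` (vertices `V`) with event labels `t`,
transfer edges `trans` (an edge is recorded by its child endpoint),
a species tree `S` (vertices `W`), the map `sig = σ` assigning to each gene
(leaf of `T`) the species (leaf of `S`) it resides in, and a least common
ancestor function `lca` on the species tree. -/
structure ReconSetup (V W : Type*) where
  T : RTree V
  S : RTree W
  t : V → Event
  trans : Set V
  sig : V → W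
  lca : Set W → W
  trans_ne_root : ∀ v ∈ trans, v ≠ T.root
  trans_hgt : ∀ v ∈ trans, t (T.par v) = Event.hgt
  leaf_iff : ∀ v, T.IsLeaf v ↔ t v = Event.leaf
  sig_leaf : ∀ v, T.IsLeaf v → S.IsLeaf (sig v)
  lca_spec : ∀ A : Set W, A.Nonempty → S.IsLca A (lca A)

/-- lower endpoint of a vertex-or-edge of the species tree
(an edge `(S.par y, y)` is encoded as `Sum.inr y`; a vertex `x` as `Sum.inl x`). -/
def lowPt {W : Type*} : W ⊕ W → W := Sum.elim id id

namespace ReconSetup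

variable {V W : Type*}

/-- ancestor order of the forest `T_{E̅}` obtained by deleting transfer edges. -/
def fanc (R : ReconSetup V W) (x y : V) : Prop :=
  ∃ k, (R.T.par)^[k] x = y ∧ ∀ i < k, (R.T.par)^[i] x ∉ R.trans

def sfanc (R : ReconSetup V W) (x y : V) : Prop := R.fanc x y ∧ x ≠ y

/-- `σ_{T̅}(u)`: the species of the leaves of `T` below `u` in the forest `T_{E̅}`. -/
def sigmaBar (R : ReconSetup V W) (u : V) : Set W :=
  R.sig '' {l | R.T.IsLeaf l ∧ R.fanc l u}

/-- Ancestor order of `S` extended to vertices and edges: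
`z ⪯ (x,y) ↔ z ⪯ y`, `(x,y) ⪯ z ↔ x ⪯ z`, `(x,y) ⪯ (a,b) ↔ y ⪯ b`. -/
def extLE (R : ReconSetup V W) : W ⊕ W → W ⊕ W → Prop
  | Sum.inl a, Sum.inl b => R.S.anc a b
  | Sum.inl a, Sum.inr y => R.S.anc a y
  | Sum.inr y, Sum.inl b => R.S.anc (R.S.par y) b
  | Sum.inr y, Sum.inr z => R.S.anc y z

def extLT (R : ReconSetup V W) (p q : W ⊕ W) : Prop := R.extLE p q ∧ ¬ R.extLE q p

def incomp (R : ReconSetup V W) (p q : W ⊕ W) : Prop := ¬ R.extLE p q ∧ ¬ R.extLE q p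

def IsDupHGT (R : ReconSetup V W) (u : V) : Prop :=
  R.t u = Event.dup ∨ R.t u = Event.hgt

/-- (M1) leaf constraint. -/
def M1 (R : ReconSetup V W) (μ : V → W ⊕ W) : Prop :=
  ∀ u, R.T.IsLeaf u → μ u = Sum.inl (R.sig u)

/-- (M2i) speciation vertices map to the lca of the species below them. -/
def M2i (R : ReconSetup V W) (μ : V → W ⊕ W) : Prop :=
  ∀ u, R.t u = Event.spec → μ u = Sum.inl (R.lca (R.sigmaBar u))

/-- (M2ii) duplication/HGT vertices map to edges of `S`. -/
def M2ii (R : ReconSetup V W) (μ : V → W ⊕ W) : Prop :=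
  ∀ u, R.IsDupHGT u → ∃ y, y ≠ R.S.root ∧ μ u = Sum.inr y

/-- (M2iii) the endpoints of a transfer edge receive incomparable images. -/
def M2iii (R : ReconSetup V W) (μ : V → W ⊕ W) : Prop :=
  ∀ v ∈ R.trans, R.incomp (μ (R.T.par v)) (μ v)

/-- (M3) ancestor constraint within components of `T_{E̅}`. -/
def M3 (R : ReconSetup V W) (μ : V → W ⊕ W) : Prop :=
  ∀ v w, R.sfanc v w →
    ((R.IsDupHGT v ∧ R.IsDupHGT w) → R.extLE (μ v) (μ w)) ∧
    (¬ (R.IsDupHGT v ∧ R.IsDupHGT w) → R.extLT (μ v) (μ w))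

/-- `μ` is a reconciliation map from `(T;t,σ)` to `S`. -/
def IsRecon (R : ReconSetup V W) (μ : V → W ⊕ W) : Prop :=
  R.M1 μ ∧ R.M2i μ ∧ R.M2ii μ ∧ R.M2iii μ ∧ R.M3 μ

/-- (O1) every internal vertex has at least two children. -/
def O1 (R : ReconSetup V W) : Prop :=
  ∀ v, ¬ R.T.IsLeaf v →
    ∃ a b, a ≠ b ∧ R.T.par a = v ∧ R.T.par b = v ∧ a ≠ v ∧ b ≠ v

/-- (O2) every HGT vertex has a transfer child edge and a non-transfer child edge. -/
def O2 (R : ReconSetup V W) : Prop :=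
  ∀ v, R.t v = Event.hgt →
    (∃ c, R.T.par c = v ∧ c ∈ R.trans) ∧ (∃ c, R.T.par c = v ∧ c ≠ v ∧ c ∉ R.trans)

/-- (Σ1) a speciation vertex has two children whose species sets are disjoint. -/
def Sigma1 (R : ReconSetup V W) : Prop :=
  ∀ x, R.t x = Event.spec →
    ∃ v w, v ≠ w ∧ R.T.par v = x ∧ R.T.par w = x ∧ v ≠ x ∧ w ≠ x ∧
      R.sigmaBar v ∩ R.sigmaBar w = ∅

/-- (Σ2) the species sets across a transfer edge are disjoint. -/
def Sigma2 (R : ReconSetup V W) : Prop :=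
  ∀ w ∈ R.trans, R.sigmaBar (R.T.par w) ∩ R.sigmaBar w = ∅

/-- the gene tree is binary. -/
def BinaryT (R : ReconSetup V W) : Prop :=
  ∀ v, ¬ R.T.IsLeaf v →
    ∃ a b, a ≠ b ∧ ∀ c, (R.T.par c = v ∧ c ≠ v) ↔ (c = a ∨ c = b)

/-- the species tree is binary. -/
def BinaryS (R : ReconSetup V W) : Prop :=
  ∀ v, ¬ R.S.IsLeaf v →
    ∃ a b, a ≠ b ∧ ∀ c, (R.S.par c = v ∧ c ≠ v) ↔ (c = a ∨ c = b)

/-- (C1) speciation vertices and leaves get the same time as their image. -/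
def C1 (R : ReconSetup V W) (μ : V → W ⊕ W) (τT : V → ℝ) (τS : W → ℝ) : Prop :=
  ∀ u x, (R.t u = Event.spec ∨ R.t u = Event.leaf) → μ u = Sum.inl x → τT u = τS x

/-- (C2) a vertex mapped into an edge `(x,y)` gets a time strictly between
the times of `x` and `y`. -/
def C2 (R : ReconSetup V W) (μ : V → W ⊕ W) (τT : V → ℝ) (τS : W → ℝ) : Prop :=
  ∀ u y, R.IsDupHGT u → μ u = Sum.inr y → τS (R.S.par y) < τT u ∧ τT u < τS y

/-- `μ` is a time-consistent reconciliation map. -/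
def TimeConsistent (R : ReconSetup V W) (μ : V → W ⊕ W) : Prop :=
  ∃ τT τS, R.T.IsTimeMap τT ∧ R.S.IsTimeMap τS ∧ R.C1 μ τT τS ∧ R.C2 μ τT τS

/-- (D1). -/
def D1 (R : ReconSetup V W) (μ : V → W ⊕ W) (τT : V → ℝ) (τS : W → ℝ) : Prop :=
  ∀ u x, μ u = Sum.inl x → τT u = τS x

/-- (D2). -/
def D2 (R : ReconSetup V W) (τT : V → ℝ) (τS : W → ℝ) : Prop :=
  ∀ u x, R.IsDupHGT u → R.S.anc x (R.lca (R.sigmaBar u)) → τT u < τS x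

/-- (D3), for a transfer edge `(T.par v, v)` with `v ∈ trans`. -/
def D3 (R : ReconSetup V W) (τT : V → ℝ) (τS : W → ℝ) : Prop :=
  ∀ v x, v ∈ R.trans →
    R.S.anc (R.lca (R.sigmaBar (R.T.par v) ∪ R.sigmaBar v)) x → τS x < τT (R.T.par v)

/-- The DTL-scenario axioms (I)-(IV) for a map `γ : V(T) → V(S)`. -/
def DTL (R : ReconSetup V W) (γ : V → W) : Prop :=
  (∀ u, R.T.IsLeaf u → γ u = R.sig u) ∧
  (∀ u v w, v ≠ w → R.T.par v = u → R.T.par w = u → v ≠ u → w ≠ u →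
    ((¬ R.S.sanc (γ u) (γ v) ∧ ¬ R.S.sanc (γ u) (γ w)) ∧
     (R.S.anc (γ v) (γ u) ∨ R.S.anc (γ w) (γ u)))) ∧
  (∀ v, v ≠ R.T.root →
    (v ∈ R.trans ↔ (¬ R.S.anc (γ (R.T.par v)) (γ v) ∧ ¬ R.S.anc (γ v) (γ (R.T.par v))))) ∧
  (∀ u v w, v ≠ w → R.T.par v = u → R.T.par w = u → v ≠ u → w ≠ u →
    ((R.t u = Event.hgt ↔ (v ∈ R.trans ∨ w ∈ R.trans)) ∧
     (R.t u = Event.spec →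
       γ u = R.lca {γ v, γ w} ∧ ¬ R.S.anc (γ v) (γ w) ∧ ¬ R.S.anc (γ w) (γ v)) ∧
     (R.t u = Event.dup → R.S.anc (R.lca {γ v, γ w}) (γ u))))

end ReconSetup

/-- A directed graph (relation) is acyclic: no edge closes a directed cycle. -/
def Acyclic {α : Type*} (r : α → α → Prop) : Prop :=
  ∀ x y, r x y → ¬ Relation.ReflTransGen r y x

/-- ancestor order of the forest obtained from `T` by deleting the edges in `E'`
(an edge is recorded by its child endpoint). -/
def ffanc {V : Type*} (T : RTree V) (E' : Set V) (x y : V) : Prop :=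
  ∃ k, (T.par)^[k] x = y ∧ ∀ i < k, (T.par)^[i] x ∉ E'

open Classical in
/-- depth of a vertex: least `k` with `par^[k] v = root`. -/
noncomputable def rdepth {V : Type*} (T : RTree V) (v : V) : ℕ :=
  Nat.find (T.reaches v)

open Classical in
lemma rdepth_spec {V : Type*} (T : RTree V) (v : V) :
    T.par^[rdepth T v] v = T.root := Nat.find_spec (T.reaches v)

open Classical in
lemma rdepth_min {V : Type*} (T : RTree V) (v : V) {j : ℕ} (hj : j < rdepth T v) :
    T.par^[j] v ≠ T.root := Nat.find_min (T.reaches v) hj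

open Classical in
lemma rdepth_le {V : Type*} (T : RTree V) (v : V) {m : ℕ} (h : T.par^[m] v = T.root) :
    rdepth T v ≤ m := Nat.find_min' (T.reaches v) h

lemma rdepth_lt_card {V : Type*} [Fintype V] (T : RTree V) (v : V) :
    rdepth T v < Fintype.card V := by
  classical
  have key : ∀ i j : ℕ, i < j → j ≤ rdepth T v → T.par^[i] v ≠ T.par^[j] v := by
    intro i j hij hjk heq
    have h1 : T.par^[rdepth T v - j + i] v = T.root := by
      rw [Function.iterate_add_apply, heq, ← Function.iterate_add_apply]
      have : rdepth T v - j + j = rdepth T v := by omega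
      rw [this]; exact rdepth_spec T v
    exact rdepth_min T v (by omega) h1
  have hinj : Function.Injective (fun i : Fin (rdepth T v + 1) => T.par^[(i : ℕ)] v) := by
    intro i j hij
    rcases lt_trichotomy (i : ℕ) (j : ℕ) with h | h | h
    · exact absurd hij (key i j h (by omega))
    · exact Fin.ext h
    · exact absurd hij.symm (key j i h (by omega))
  have := Fintype.card_le_of_injective _ hinj
  simpa using this

lemma rdepth_lt_of_child {V : Type*} (T : RTree V) {c ρ : V}
    (h : T.par c = ρ) (hne : c ≠ ρ) : rdepth T ρ < rdepth T c := by
  have hc0 : rdepth T c ≠ 0 := by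
    intro h0
    have hcr : c = T.root := by
      have := rdepth_spec T c; rw [h0] at this; simpa using this
    apply hne
    rw [hcr] at h ⊢
    rw [← h, T.par_root]
  obtain ⟨m, hm⟩ := Nat.exists_eq_succ_of_ne_zero hc0
  have hρ : T.par^[m] ρ = T.root := by
    rw [← h, ← Function.iterate_succ_apply, ← hm]
    exact rdepth_spec T c
  have := rdepth_le T ρ hρ
  omega

/-- if every vertex that is the parent of some deleted edge also has a
child edge that is not deleted, then the leaf sets of the connected components of the
forest `T_{E'}` (whose roots are the tree root and the lower endpoints of deleted
edges) form a partition of the leaf set of `T`: every leaf lies below exactly one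
component root, and every component root has at least one leaf below it. -/
theorem stmt0 {V : Type*} [Fintype V] (T : RTree V) (E' : Set V)
    (hE' : ∀ v ∈ E', v ≠ T.root)
    (hO2 : ∀ v, (∃ c ∈ E', T.par c = v) → ∃ c, T.par c = v ∧ c ≠ v ∧ c ∉ E') :
    (∀ l, T.IsLeaf l → ∃! ρ, (ρ ∈ E' ∨ ρ = T.root) ∧ ffanc T E' l ρ) ∧
    (∀ ρ, (ρ ∈ E' ∨ ρ = T.root) → ∃ l, T.IsLeaf l ∧ ffanc T E' l ρ) := by
  classical
  constructor
  · intro l _hl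
    have hex : ∃ k, T.par^[k] l ∈ E' ∨ T.par^[k] l = T.root := by
      obtain ⟨k, hk⟩ := T.reaches l
      exact ⟨k, Or.inr hk⟩
    set k := Nat.find hex with hkdef
    have hk : T.par^[k] l ∈ E' ∨ T.par^[k] l = T.root := Nat.find_spec hex
    have hmin : ∀ i < k, T.par^[i] l ∉ E' := fun i hi hmem =>
      Nat.find_min hex hi (Or.inl hmem)
    have key : ∀ k1 k2 : ℕ, k1 ≤ k2 →
        (T.par^[k1] l ∈ E' ∨ T.par^[k1] l = T.root) →
        (∀ i < k2, T.par^[i] l ∉ E') →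
        T.par^[k1] l = T.par^[k2] l := by
      intro k1 k2 hle h1 h2
      rcases eq_or_lt_of_le hle with h | h
      · rw [h]
      · have hroot : T.par^[k1] l = T.root := by
          rcases h1 with h1 | h1
          · exact absurd h1 (h2 k1 h)
          · exact h1
        have : T.par^[k2] l = T.par^[k2 - k1] (T.par^[k1] l) := by
          rw [← Function.iterate_add_apply]
          congr 1
          omega
        rw [this, hroot, Function.iterate_fixed T.par_root]
    refine ⟨T.par^[k] l, ⟨hk, k, rfl, hmin⟩, ?_⟩
    rintro ρ' ⟨hρ', k', rfl, hmin'⟩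
    rcases le_total k' k with h | h
    · exact key k' k h hρ' hmin
    · exact (key k k' h hk hmin').symm
  · intro ρ _hρ
    have aux : ∀ n (ρ : V), Fintype.card V - rdepth T ρ ≤ n →
        ∃ l, T.IsLeaf l ∧ ffanc T E' l ρ := by
      intro n
      induction n with
      | zero =>
        intro ρ h
        have := rdepth_lt_card T ρ
        omega
      | succ n ih =>
        intro ρ h
        by_cases hleaf : T.IsLeaf ρ
        · exact ⟨ρ, hleaf, 0, rfl, fun i hi => absurd hi (Nat.not_lt_zero i)⟩
        · have hchild : ∃ c, T.par c = ρ ∧ c ≠ ρ ∧ c ∉ E' := by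
            have : ∃ u, T.par u = ρ ∧ u ≠ ρ := by
              by_contra hcon
              push_neg at hcon
              exact hleaf hcon
            obtain ⟨u, hu, hune⟩ := this
            by_cases huE : u ∈ E'
            · exact hO2 ρ ⟨u, huE, hu⟩
            · exact ⟨u, hu, hune, huE⟩
          obtain ⟨c, hc, hcne, hcE⟩ := hchild
          have hd : rdepth T ρ < rdepth T c := rdepth_lt_of_child T hc hcne
          have hcard := rdepth_lt_card T c
          obtain ⟨l, hl, kk, hkk, havoid⟩ := ih c (by omega)
          refine ⟨l, hl, kk + 1, ?_, ?_⟩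
          · rw [Function.iterate_succ_apply', hkk, hc]
          · intro i hi
            rcases lt_or_eq_of_le (Nat.lt_succ_iff.mp hi) with h' | h'
            · exact havoid i h'
            · rw [h', hkk]; exact hcE
    exact aux (Fintype.card V - rdepth T ρ) ρ le_rfl
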